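/- arXiv:1505.05967 — 3 statements merged into one kernel-verified Lean document; each statement's English description precedes it below -/
import Mathlib

section
/- Let Ω be a compact metric space, θ ∈ Ω, and for each j ∈ ℕ let g_j : Ω → ℝ^{m_j} be continuous. Assume the nesting property: for j ≤ k and any θ₁, θ₂ ∈ Ω, ‖g_j(θ₁) − g_j(θ₂)‖ ≤ ‖g_k(θ₁) − g_k(θ₂)‖. Let (θ_k) be a sequence in Ω with ‖g_k(θ_k) − g_k(θ)‖ ≤ μ_k where μ_k → 0. Then every accumulation point q of (θ_k) satisfies g_j(q) = g_j(θ) for all j. -/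
open Filter Metric

theorem stmt5 {Ω : Type*} [MetricSpace Ω] [CompactSpace Ω]
    (θ : Ω) (m : ℕ → ℕ)
    (g : (j : ℕ) → Ω → EuclideanSpace ℝ (Fin (m j)))
    (hg : ∀ j, Continuous (g j))
    (hnest : ∀ j k : ℕ, j ≤ k → ∀ θ₁ θ₂ : Ω,
      ‖g j θ₁ - g j θ₂‖ ≤ ‖g k θ₁ - g k θ₂‖)
    (θseq : ℕ → Ω) (μ : ℕ → ℝ)
    (hμ0 : Tendsto μ atTop (nhds 0))
    (hbound : ∀ k, ‖g k (θseq k) - g k θ‖ ≤ μ k)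
    (q : Ω) (φ : ℕ → ℕ) (hφ : StrictMono φ)
    (hconv : Tendsto (fun l => θseq (φ l)) atTop (nhds q)) :
    ∀ j, g j q = g j θ := by
  intro j
  have h1 : Tendsto (fun l => ‖g j (θseq (φ l)) - g j θ‖) atTop (nhds ‖g j q - g j θ‖) :=
    (((hg j).tendsto q).comp hconv |>.sub tendsto_const_nhds).norm
  have h2 : Tendsto (fun l => ‖g j (θseq (φ l)) - g j θ‖) atTop (nhds 0) := by
    have hμφ : Tendsto (fun l => μ (φ l)) atTop (nhds 0) :=
      hμ0.comp hφ.tendsto_atTop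
    refine squeeze_zero' (Eventually.of_forall fun l => norm_nonneg _) ?_ hμφ
    filter_upwards [eventually_ge_atTop j] with l hl
    calc ‖g j (θseq (φ l)) - g j θ‖
        ≤ ‖g (φ l) (θseq (φ l)) - g (φ l) θ‖ :=
          hnest j (φ l) (hl.trans (hφ.id_le l)) _ _
      _ ≤ μ (φ l) := hbound (φ l)
  exact sub_eq_zero.mp (norm_eq_zero.mp (tendsto_nhds_unique h1 h2))
end

section
/- Let Ω be a compact metric space and suppose the family of continuous maps g_j : Ω → ℝ^{m_j} satisfies the initial-segment property and the sequence (θ_k) in Ω satisfies g_k(θ_k) = g_k(θ) for all k (exact solutions). If moreover g_1 satisfies the local injectivity estimate of the linearization (there are c > 0 and ε > 0 such that ‖g_1(θ₁) − g_1(θ₂)‖ ≥ c‖θ₁ − θ₂‖ whenever ‖θ₁ − θ₂‖ < ε), then every convergent subsequence of (θ_k) is eventually constant; consequently the sequence (θ_k) takes some value θ♯ infinitely often with g_j(θ♯) = g_j(θ) for all j. -/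
open Filter Metric

theorem stmt6 {p : ℕ} {Ω : Set (EuclideanSpace ℝ (Fin p))}
    (hΩ : IsCompact Ω)
    (θ : EuclideanSpace ℝ (Fin p)) (hθ : θ ∈ Ω) (m : ℕ → ℕ)
    (g : (j : ℕ) → EuclideanSpace ℝ (Fin p) → EuclideanSpace ℝ (Fin (m j)))
    (hg : ∀ j, Continuous (g j))
    (hnest : ∀ j k : ℕ, j ≤ k → ∀ θ₁ ∈ Ω, ∀ θ₂ ∈ Ω,
      ‖g j θ₁ - g j θ₂‖ ≤ ‖g k θ₁ - g k θ₂‖)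
    (θseq : ℕ → EuclideanSpace ℝ (Fin p)) (hmem : ∀ k, θseq k ∈ Ω)
    (hexact : ∀ k, g k (θseq k) = g k θ)
    (c ε : ℝ) (hc : 0 < c) (hε : 0 < ε)
    (hlow : ∀ θ₁ ∈ Ω, ∀ θ₂ ∈ Ω, ‖θ₁ - θ₂‖ < ε →
      ‖g 1 θ₁ - g 1 θ₂‖ ≥ c * ‖θ₁ - θ₂‖) :
    (∀ (φ : ℕ → ℕ) (q : EuclideanSpace ℝ (Fin p)), StrictMono φ →
      Tendsto (fun l => θseq (φ l)) atTop (nhds q) →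
      ∃ lbar, ∀ l ≥ lbar, θseq (φ l) = q) ∧
    ∃ θs : EuclideanSpace ℝ (Fin p),
      {k : ℕ | θseq k = θs}.Infinite ∧ ∀ j, g j θs = g j θ := by
  -- key: for any j ≤ k, g j (θseq k) = g j θ
  have key : ∀ j k : ℕ, j ≤ k → g j (θseq k) = g j θ := by
    intro j k hjk
    have h1 := hnest j k hjk (θseq k) (hmem k) θ hθ
    rw [hexact k, sub_self, norm_zero] at h1
    have := norm_le_zero_iff.mp h1
    exact sub_eq_zero.mp this
  have main : ∀ (φ : ℕ → ℕ) (q : EuclideanSpace ℝ (Fin p)), StrictMono φ →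
      Tendsto (fun l => θseq (φ l)) atTop (nhds q) →
      ∃ lbar, ∀ l ≥ lbar, θseq (φ l) = q := by
    intro φ q hφ htend
    have hqΩ : q ∈ Ω :=
      hΩ.isClosed.mem_of_tendsto htend (Eventually.of_forall fun l => hmem (φ l))
    -- g 1 q = g 1 θ
    have hg1q : g 1 q = g 1 θ := by
      have h2 : Tendsto (fun l => g 1 (θseq (φ l))) atTop (nhds (g 1 q)) :=
        ((hg 1).continuousAt.tendsto).comp htend
      have h3 : ∀ᶠ l in atTop, g 1 (θseq (φ l)) = g 1 θ := by
        filter_upwards [eventually_ge_atTop 1] with l hl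
        exact key 1 (φ l) (le_trans hl (hφ.le_apply))
      have h4 : Tendsto (fun l => g 1 (θseq (φ l))) atTop (nhds (g 1 θ)) :=
        Tendsto.congr' (h3.mono fun _ h => h.symm) tendsto_const_nhds
      exact tendsto_nhds_unique h2 h4
    -- eventually within ε of q
    have h5 : ∀ᶠ l in atTop, ‖θseq (φ l) - q‖ < ε := by
      have := (tendsto_iff_norm_sub_tendsto_zero.mp htend)
      exact (this.eventually (gt_mem_nhds hε))
    obtain ⟨N, hN⟩ := (h5.and (eventually_ge_atTop 1)).exists_forall_of_atTop
    refine ⟨N, fun l hl => ?_⟩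
    obtain ⟨hdist, hl1⟩ := hN l hl
    have hgeq : g 1 (θseq (φ l)) = g 1 q := by
      rw [key 1 (φ l) (le_trans hl1 hφ.le_apply), hg1q]
    have := hlow (θseq (φ l)) (hmem (φ l)) q hqΩ hdist
    rw [hgeq, sub_self, norm_zero] at this
    have hnn : 0 ≤ ‖θseq (φ l) - q‖ := norm_nonneg _
    have : ‖θseq (φ l) - q‖ ≤ 0 := by nlinarith
    exact sub_eq_zero.mp (norm_le_zero_iff.mp this)
  refine ⟨main, ?_⟩
  obtain ⟨x, hxΩ, φ, hφ, htend⟩ := hΩ.tendsto_subseq hmem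
  obtain ⟨lbar, hlbar⟩ := main φ x hφ htend
  refine ⟨x, ?_, ?_⟩
  · apply Set.infinite_of_injective_forall_mem (f := fun l : ℕ => φ (l + lbar))
    · intro a b hab
      have := hφ.injective hab
      omega
    · intro a
      exact hlbar (a + lbar) (Nat.le_add_left _ _)
  · intro j
    have h1 : θseq (φ (max lbar j)) = x := hlbar _ (le_max_left _ _)
    have h2 : j ≤ φ (max lbar j) := le_trans (le_max_right _ _) hφ.le_apply
    rw [← h1]
    exact key j _ h2
end

section
/- Let Ω ⊆ ℝ^p be compact and (θ_k) a sequence in Ω with nonempty accumulation point set L. Suppose there exist ε₁ > 0, c₁ > 0 and a continuous g₁ : Ω → ℝ^m such that ‖g₁(θ₁) − g₁(θ₂)‖ ≥ c₁‖θ₁ − θ₂‖ whenever θ₁, θ₂ ∈ Ω and ‖θ₁ − θ₂‖ ≤ ε₁, and suppose g₁(q) = g₁(θ) for all q ∈ L and ‖g₁(θ_k) − g₁(θ)‖ ≤ μ_k with μ_k → 0. Then, denoting q_k a closest point of L to θ_k, dist(θ_k, L) = ‖θ_k − q_k‖ ≤ μ_k/c₁ for all sufficiently large k; in particular dist(θ_k,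 L) → 0. -/
open Filter Metric

theorem stmt12 {p m : ℕ}
    (Ω : Set (EuclideanSpace ℝ (Fin p))) (hΩ : IsCompact Ω)
    (θ : EuclideanSpace ℝ (Fin p)) (hθ : θ ∈ Ω)
    (θseq : ℕ → EuclideanSpace ℝ (Fin p)) (hmem : ∀ k, θseq k ∈ Ω)
    (L : Set (EuclideanSpace ℝ (Fin p)))
    (hL : L = {q | ∃ φ : ℕ → ℕ, StrictMono φ ∧
      Tendsto (fun l => θseq (φ l)) atTop (nhds q)})
    (hLne : L.Nonempty)
    (g₁ : EuclideanSpace ℝ (Fin p) → EuclideanSpace ℝ (Fin m))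
    (hg₁ : Continuous g₁)
    (ε₁ c₁ : ℝ) (hε₁ : 0 < ε₁) (hc₁ : 0 < c₁)
    (hlow : ∀ θ₁ ∈ Ω, ∀ θ₂ ∈ Ω, ‖θ₁ - θ₂‖ ≤ ε₁ →
      ‖g₁ θ₁ - g₁ θ₂‖ ≥ c₁ * ‖θ₁ - θ₂‖)
    (hLconst : ∀ q ∈ L, g₁ q = g₁ θ)
    (μ : ℕ → ℝ) (hμ0 : Tendsto μ atTop (nhds 0))
    (hbound : ∀ k, ‖g₁ (θseq k) - g₁ θ‖ ≤ μ k)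
    (q : ℕ → EuclideanSpace ℝ (Fin p))
    (hq : ∀ k, q k ∈ L ∧ dist (θseq k) (q k) = infDist (θseq k) L) :
    (∃ K : ℕ, ∀ k ≥ K, dist (θseq k) (q k) ≤ μ k / c₁) ∧
    Tendsto (fun k => infDist (θseq k) L) atTop (nhds 0) := by

  have hLsub : L ⊆ Ω := by
    rintro x hx
    rw [hL] at hx
    obtain ⟨φ, hφ, hconv⟩ := hx
    exact hΩ.isClosed.mem_of_tendsto hconv (Filter.Eventually.of_forall fun l => hmem _)
  have hinf : ∀ ε > 0, ∀ᶠ k in atTop, infDist (θseq k) L < ε := by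
    intro ε hε
    by_contra hcon
    rw [Filter.not_eventually] at hcon
    obtain ⟨φ, hφ, hge⟩ := Filter.extraction_of_frequently_atTop
      (hcon.mono fun k hk => not_lt.mp hk)
    obtain ⟨q', hq'Ω, ψ, hψ, hconv⟩ := hΩ.tendsto_subseq (fun l => hmem (φ l))
    have hq'L : q' ∈ L := by
      rw [hL]; exact ⟨φ ∘ ψ, hφ.comp hψ, hconv⟩
    have hd : Tendsto (fun l => dist (θseq (φ (ψ l))) q') atTop (nhds 0) :=
      tendsto_iff_dist_tendsto_zero.mp hconv
    have h1 : Tendsto (fun l => infDist (θseq (φ (ψ l))) L) atTop (nhds 0) :=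
      squeeze_zero (fun l => infDist_nonneg) (fun l => infDist_le_dist_of_mem hq'L) hd
    obtain ⟨l, hl⟩ := (h1.eventually (eventually_lt_nhds hε)).exists
    exact absurd (hge (ψ l)) (not_le.mpr hl)
  have htend : Tendsto (fun k => infDist (θseq k) L) atTop (nhds 0) := by
    rw [Metric.tendsto_atTop]
    intro ε hε
    obtain ⟨K, hK⟩ := (hinf ε hε).exists_forall_of_atTop
    refine ⟨K, fun k hk => ?_⟩
    rw [Real.dist_eq, sub_zero, abs_of_nonneg infDist_nonneg]
    exact hK k hk
  refine ⟨?_, htend⟩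
  obtain ⟨K, hK⟩ := (hinf ε₁ hε₁).exists_forall_of_atTop
  refine ⟨K, fun k hk => ?_⟩
  have hqk := hq k
  have hsmall : ‖θseq k - q k‖ ≤ ε₁ := by
    rw [← dist_eq_norm, hqk.2]
    exact le_of_lt (hK k hk)
  have hlow' := hlow (θseq k) (hmem k) (q k) (hLsub hqk.1) hsmall
  rw [hLconst (q k) hqk.1] at hlow'
  have : c₁ * dist (θseq k) (q k) ≤ μ k := by
    rw [dist_eq_norm]
    exact le_trans hlow' (hbound k)
  rw [le_div_iff₀ hc₁]
  linarith
end
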